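/- Let n ≥ 1 and λ ≥ 0. There is a constant c = c(n,λ) such that for every weight w on ℝ^n, every t > 0 and every nonnegative measurable f, one has the Fefferman–Stein type inequality w({x ∈ ℝ^n : M_{Φ_λ}f(x) > t}) ≤ c ∫_{ℝ^n} Φ_λ(f(x)/t) Mw(x) dx, where w(E) = ∫_E w dx. -/

import Mathlib

open MeasureTheory Filter
open scoped ENNReal NNReal

/-- A (closed) cube in ℝⁿ with sides parallel to the coordinate axes. -/
def IsCube (n : ℕ) (Q : Set (Fin n → ℝ)) : Prop :=
  ∃ (a : Fin n → ℝ) (h : ℝ), 0 < h ∧ Q = {y | ∀ i, y i ∈ Set.Icc (a i) (a i + h)}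

/-- Average of an `ℝ≥0∞`-valued function over a set. -/
noncomputable def setAvg (n : ℕ) (Q : Set (Fin n → ℝ)) (g : (Fin n → ℝ) → ℝ≥0∞) : ℝ≥0∞ :=
  (volume Q)⁻¹ * ∫⁻ y in Q, g y

/-- The Muckenhoupt `A_p` constant of a weight `w`. -/
noncomputable def ApConst (n : ℕ) (p : ℝ) (w : (Fin n → ℝ) → ℝ≥0∞) : ℝ≥0∞ :=
  ⨆ (Q : Set (Fin n → ℝ)) (_ : IsCube n Q),
    setAvg n Q w * (setAvg n Q fun y => w y ^ (1 - p / (p - 1))) ^ (p - 1)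

/-- A weight: a measurable nonnegative (`ℝ≥0∞`-valued) locally integrable function. -/
def IsWeight (n : ℕ) (w : (Fin n → ℝ) → ℝ≥0∞) : Prop :=
  Measurable w ∧ ∀ Q : Set (Fin n → ℝ), IsCube n Q → (∫⁻ y in Q, w y) < ∞

/-- Weighted L^p norm of an `ℝ≥0∞`-valued function. -/
noncomputable def wLpNormE (n : ℕ) (p : ℝ) (w : (Fin n → ℝ) → ℝ≥0∞)
    (g : (Fin n → ℝ) → ℝ≥0∞) : ℝ≥0∞ :=
  (∫⁻ x, g x ^ p * w x) ^ (1 / p)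

/-- Weighted L^p norm of a real function. -/
noncomputable def wLpNorm (n : ℕ) (p : ℝ) (w : (Fin n → ℝ) → ℝ≥0∞)
    (f : (Fin n → ℝ) → ℝ) : ℝ≥0∞ :=
  wLpNormE n p w fun x => (‖f x‖₊ : ℝ≥0∞)

/-- Unweighted L^p norm of a real function on ℝⁿ. -/
noncomputable def lpNorm (n : ℕ) (p : ℝ) (f : (Fin n → ℝ) → ℝ) : ℝ≥0∞ :=
  (∫⁻ x, (‖f x‖₊ : ℝ≥0∞) ^ p) ^ (1 / p)

/-- Unweighted L^p norm of an `ℝ≥0∞`-valued function on ℝⁿ. -/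
noncomputable def lpNormE (n : ℕ) (p : ℝ) (g : (Fin n → ℝ) → ℝ≥0∞) : ℝ≥0∞ :=
  (∫⁻ x, g x ^ p) ^ (1 / p)

/-- Operator norm on unweighted `L^p(ℝⁿ)`: the least `C ∈ [0,∞]` with
`‖Tf‖_p ≤ C ‖f‖_p` for all `f ∈ L^p`. -/
noncomputable def opNorm (n : ℕ) (p : ℝ)
    (T : ((Fin n → ℝ) → ℝ) → (Fin n → ℝ) → ℝ) : ℝ≥0∞ :=
  sInf {C : ℝ≥0∞ | ∀ f : (Fin n → ℝ) → ℝ, Measurable f → lpNorm n p f < ∞ →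
    lpNorm n p (T f) ≤ C * lpNorm n p f}

/-- The Hardy–Littlewood maximal operator (over cubes with sides parallel to the axes). -/
noncomputable def HLM (n : ℕ) (g : (Fin n → ℝ) → ℝ≥0∞) : (Fin n → ℝ) → ℝ≥0∞ :=
  fun x => ⨆ (Q : Set (Fin n → ℝ)) (_ : IsCube n Q) (_ : x ∈ Q), setAvg n Q g

/-- The operator norm of the Hardy–Littlewood maximal operator on `L^p(ℝⁿ)`. -/
noncomputable def maximalOpNorm (n : ℕ) (p : ℝ) : ℝ≥0∞ :=
  sInf {C : ℝ≥0∞ | ∀ f : (Fin n → ℝ) → ℝ, Measurable f → lpNorm n p f < ∞ →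
    lpNormE n p (HLM n fun y => (‖f y‖₊ : ℝ≥0∞)) ≤ C * lpNorm n p f}

/-- The Young function `Φ_λ(t) = t (log(e+t))^λ`. -/
noncomputable def PhiLam (lam t : ℝ) : ℝ := t * Real.log (Real.exp 1 + t) ^ lam

/-- Localized Luxemburg norm `‖f‖_{Φ_λ,Q}` over a cube `Q`. -/
noncomputable def luxNorm (n : ℕ) (lam : ℝ) (Q : Set (Fin n → ℝ))
    (f : (Fin n → ℝ) → ℝ) : ℝ≥0∞ :=
  ⨅ (t : ℝ) (_ : 0 < t)
    (_ : (volume Q)⁻¹ * ∫⁻ y in Q, ENNReal.ofReal (PhiLam lam (|f y| / t)) ≤ 1),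
    ENNReal.ofReal t

/-- The Orlicz maximal operator `M_{Φ_λ} f(x) = sup_{Q ∋ x} ‖f‖_{Φ_λ,Q}`. -/
noncomputable def orliczMax (n : ℕ) (lam : ℝ) (f : (Fin n → ℝ) → ℝ) :
    (Fin n → ℝ) → ℝ≥0∞ :=
  fun x => ⨆ (Q : Set (Fin n → ℝ)) (_ : IsCube n Q) (_ : x ∈ Q), luxNorm n lam Q f

/-!
If `‖f‖_{Φ_λ,Q} > t` for a cube `Q ∋ x`, then the average of `Φ_λ(f/t)` over `Q` exceeds `1`;
hence `{M_{Φ_λ} f > t} ⊆ {M(Φ_λ(f/t)) > 1}` and it suffices to prove the weak-type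
Fefferman–Stein inequality `w({M g > 1}) ≤ 4ⁿ ∫ g Mw`. If the average of `g` over a cube `Q`
exceeds `1`, then `w(4Q) = |4Q| ⟨w⟩_{4Q} ≤ 4ⁿ ⟨w⟩_{4Q} ∫_Q g ≤ 4ⁿ ∫_Q g Mw`, because
`Mw ≥ ⟨w⟩_{4Q}` on `Q`. A Vitali subfamily of disjoint such cubes whose fourfold dilations cover
the level set then gives the bound.
-/

open Metric

lemma closedBall_eq_setOf_forall_mem_Icc {n : ℕ} (c : Fin n → ℝ) {r : ℝ} (hr : 0 ≤ r) :
    closedBall c r = {y | ∀ i, y i ∈ Set.Icc (c i - r) (c i + r)} := by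
  ext y
  simp only [closedBall_pi c hr, Real.closedBall_eq_Icc, Set.mem_pi, Set.mem_univ, true_imp_iff,
    Set.mem_ofPred_eq]

lemma isCube_iff_exists_closedBall {n : ℕ} {Q : Set (Fin n → ℝ)} :
    IsCube n Q ↔ ∃ c r, 0 < r ∧ Q = closedBall c r := by
  constructor
  · rintro ⟨a, h, hh, rfl⟩
    refine ⟨a + fun _ => h / 2, h / 2, by positivity, ?_⟩
    rw [closedBall_eq_setOf_forall_mem_Icc _ (by positivity)]
    ext y
    simp only [Set.mem_ofPred_eq, Pi.add_apply, add_sub_cancel_right, add_assoc, add_halves]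
  · rintro ⟨c, r, hr, rfl⟩
    refine ⟨c - fun _ => r, 2 * r, by positivity, ?_⟩
    rw [closedBall_eq_setOf_forall_mem_Icc c hr.le]
    ext y
    simp only [Set.mem_ofPred_eq, Pi.sub_apply, sub_add_eq_add_sub, two_mul, ← add_assoc,
      add_sub_cancel_right]

lemma volume_closedBall_four_mul {n : ℕ} (c : Fin n → ℝ) {r : ℝ} (hr : 0 ≤ r) :
    volume (closedBall c (4 * r)) = 4 ^ n * volume (closedBall c r) := by
  rw [Measure.addHaar_closedBall_mul volume c (by norm_num) hr,
    Measure.addHaar_closedBall_center volume c r, Module.finrank_fin_fun]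
  norm_num

lemma setAvg_le_HLM {n : ℕ} (g : (Fin n → ℝ) → ℝ≥0∞) {Q : Set (Fin n → ℝ)}
    (hQ : IsCube n Q) {x : Fin n → ℝ} (hx : x ∈ Q) : setAvg n Q g ≤ HLM n g x :=
  le_iSup_of_le Q <| le_iSup_of_le hQ <| le_iSup_of_le hx le_rfl

lemma luxNorm_le_of_setAvg_le_one {n : ℕ} {lam t : ℝ} (ht : 0 < t) {Q : Set (Fin n → ℝ)}
    {f : (Fin n → ℝ) → ℝ} (hQ : setAvg n Q (fun y => ENNReal.ofReal (PhiLam lam (|f y| / t))) ≤ 1) :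
    luxNorm n lam Q f ≤ ENNReal.ofReal t :=
  iInf₂_le_of_le t ht <| iInf_le_of_le hQ le_rfl

lemma one_lt_HLM_of_lt_orliczMax {n : ℕ} {lam t : ℝ} (ht : 0 < t) {f : (Fin n → ℝ) → ℝ}
    {x : Fin n → ℝ} (hx : ENNReal.ofReal t < orliczMax n lam f x) :
    1 < HLM n (fun y => ENNReal.ofReal (PhiLam lam (|f y| / t))) x := by
  obtain ⟨Q, hQ, hxQ, hQf⟩ : ∃ Q, IsCube n Q ∧ x ∈ Q ∧ ENNReal.ofReal t < luxNorm n lam Q f := by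
    simpa only [orliczMax, lt_iSup_iff, exists_prop] using hx
  by_contra! hle
  exact hQf.not_ge <| luxNorm_le_of_setAvg_le_one ht <| (setAvg_le_HLM _ hQ hxQ).trans hle

lemma setLIntegral_closedBall_four_mul_le {n : ℕ} (w g : (Fin n → ℝ) → ℝ≥0∞) (c : Fin n → ℝ)
    {r : ℝ} (hr : 0 < r) (hg : 1 < setAvg n (closedBall c r) g) :
    ∫⁻ y in closedBall c (4 * r), w y ≤ 4 ^ n * ∫⁻ y in closedBall c r, g y * HLM n w y := by
  set A := setAvg n (closedBall c (4 * r)) w with hA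
  have hvol_le : volume (closedBall c r) ≤ ∫⁻ y in closedBall c r, g y := by
    have := mul_le_mul_right hg.le (volume (closedBall c r))
    rwa [mul_one, setAvg, ENNReal.mul_inv_cancel_left (measure_closedBall_pos volume c hr).ne'
      measure_closedBall_lt_top.ne] at this
  have hA_le : ∀ y ∈ closedBall c r, A ≤ HLM n w y := fun y hy =>
    setAvg_le_HLM w (isCube_iff_exists_closedBall.2 ⟨c, 4 * r, by positivity, rfl⟩)
      (closedBall_subset_closedBall (by linarith) hy)
  calc ∫⁻ y in closedBall c (4 * r), w y = volume (closedBall c (4 * r)) * A := by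
        rw [hA, setAvg, ENNReal.mul_inv_cancel_left
          (measure_closedBall_pos volume c (by positivity)).ne' measure_closedBall_lt_top.ne]
    _ = 4 ^ n * (A * volume (closedBall c r)) := by
        rw [volume_closedBall_four_mul c hr.le]; ring
    _ ≤ 4 ^ n * ∫⁻ y in closedBall c r, A * g y := by
        gcongr; exact (mul_le_mul_right hvol_le A).trans (lintegral_const_mul_le _ _)
    _ ≤ 4 ^ n * ∫⁻ y in closedBall c r, g y * HLM n w y := by
        gcongr 1
        refine setLIntegral_mono' measurableSet_closedBall fun y hy => ?_
        rw [mul_comm]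
        exact mul_le_mul_right (hA_le y hy) _

lemma withDensity_biUnion_closedBall_le {n : ℕ} (w g : (Fin n → ℝ) → ℝ≥0∞) {R : ℝ}
    (t : Set ((Fin n → ℝ) × ℝ))
    (ht : ∀ p ∈ t, 0 < p.2 ∧ p.2 ≤ R ∧ 1 < setAvg n (closedBall p.1 p.2) g) :
    volume.withDensity w (⋃ p ∈ t, closedBall p.1 p.2) ≤ 4 ^ n * ∫⁻ x, g x * HLM n w x := by
  obtain ⟨u, hut, hdisj, hcov⟩ :=
    Vitali.exists_disjoint_subfamily_covering_enlargement_closedBall t Prod.fst Prod.snd R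
      (fun p hp => (ht p hp).2.1) 4 (by norm_num)
  have hu : u.Countable := hdisj.countable_of_nonempty_interior fun p hp =>
    ⟨p.1, ball_subset_interior_closedBall (mem_ball_self (ht p (hut hp)).1)⟩
  calc volume.withDensity w (⋃ p ∈ t, closedBall p.1 p.2)
      ≤ volume.withDensity w (⋃ p ∈ u, closedBall p.1 (4 * p.2)) := by
        refine measure_mono <| Set.iUnion₂_subset fun p hp => ?_
        obtain ⟨q, hq, hpq⟩ := hcov p hp
        exact hpq.trans (Set.subset_biUnion_of_mem (u := fun p => closedBall p.1 (4 * p.2)) hq)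
    _ ≤ ∑' p : u, volume.withDensity w (closedBall p.1.1 (4 * p.1.2)) := measure_biUnion_le _ hu _
    _ ≤ ∑' p : u, 4 ^ n * ∫⁻ y in closedBall p.1.1 p.1.2, g y * HLM n w y := by
        refine ENNReal.tsum_le_tsum fun p => ?_
        rw [withDensity_apply _ measurableSet_closedBall]
        exact setLIntegral_closedBall_four_mul_le w g _ (ht p (hut p.2)).1 (ht p (hut p.2)).2.2
    _ = 4 ^ n * ∫⁻ y in ⋃ p ∈ u, closedBall p.1 p.2, g y * HLM n w y := by
        rw [ENNReal.tsum_mul_left, lintegral_biUnion hu (fun _ _ => measurableSet_closedBall) hdisj]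
    _ ≤ 4 ^ n * ∫⁻ y, g y * HLM n w y := by
        gcongr; exact Measure.restrict_le_self

theorem setLIntegral_one_lt_HLM_le {n : ℕ} (w g : (Fin n → ℝ) → ℝ≥0∞) :
    ∫⁻ x in {x | 1 < HLM n g x}, w x ≤ 4 ^ n * ∫⁻ x, g x * HLM n w x := by
  -- Vitali's lemma needs bounded radii, hence the exhaustion by the families `t k`.
  set t : ℕ → Set ((Fin n → ℝ) × ℝ) := fun k =>
    {p | 0 < p.2 ∧ p.2 ≤ k ∧ 1 < setAvg n (closedBall p.1 p.2) g}
  have ht_mono : Monotone fun k => ⋃ p ∈ t k, closedBall p.1 p.2 := fun k l hkl =>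
    Set.biUnion_mono (fun p hp => ⟨hp.1, hp.2.1.trans (by exact_mod_cast hkl), hp.2.2⟩)
      fun _ _ => subset_rfl
  have hcover : {x | 1 < HLM n g x} ⊆ ⋃ k, ⋃ p ∈ t k, closedBall p.1 p.2 := by
    intro x hx
    obtain ⟨Q, hQ, hxQ, hQg⟩ : ∃ Q, IsCube n Q ∧ x ∈ Q ∧ 1 < setAvg n Q g := by
      simpa only [Set.mem_ofPred_eq, HLM, lt_iSup_iff, exists_prop] using hx
    obtain ⟨c, r, hr, rfl⟩ := isCube_iff_exists_closedBall.1 hQ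
    exact Set.mem_iUnion.2 ⟨⌈r⌉₊, Set.mem_biUnion (x := (c, r)) ⟨hr, Nat.le_ceil r, hQg⟩ hxQ⟩
  -- The level set need not be measurable: its `w`-integral is bounded by the outer measure
  -- `volume.withDensity w`, which is countably subadditive and continuous along monotone unions.
  calc ∫⁻ x in {x | 1 < HLM n g x}, w x ≤ volume.withDensity w {x | 1 < HLM n g x} :=
        withDensity_apply_le _ _
    _ ≤ volume.withDensity w (⋃ k, ⋃ p ∈ t k, closedBall p.1 p.2) := measure_mono hcover
    _ = ⨆ k, volume.withDensity w (⋃ p ∈ t k, closedBall p.1 p.2) := ht_mono.measure_iUnion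
    _ ≤ 4 ^ n * ∫⁻ x, g x * HLM n w x :=
        iSup_le fun k => withDensity_biUnion_closedBall_le w g (t k) fun _ hp => hp

theorem statement12_general (n : ℕ) (lam : ℝ) :
    ∃ c : ℝ≥0∞, 0 < c ∧ c < ∞ ∧
      ∀ w : (Fin n → ℝ) → ℝ≥0∞, IsWeight n w →
        ∀ t : ℝ, 0 < t → ∀ f : (Fin n → ℝ) → ℝ, Measurable f → (∀ x, 0 ≤ f x) →
          (∫⁻ x in {x | ENNReal.ofReal t < orliczMax n lam f x}, w x) ≤
            c * ∫⁻ x, ENNReal.ofReal (PhiLam lam (f x / t)) * HLM n w x := by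
  refine ⟨4 ^ n, by positivity, ENNReal.pow_lt_top (by norm_num), fun w _ t ht f _ hf => ?_⟩
  calc ∫⁻ x in {x | ENNReal.ofReal t < orliczMax n lam f x}, w x
      ≤ ∫⁻ x in {x | 1 < HLM n (fun y => ENNReal.ofReal (PhiLam lam (|f y| / t))) x}, w x :=
        lintegral_mono_set fun _ => one_lt_HLM_of_lt_orliczMax ht
    _ ≤ 4 ^ n * ∫⁻ x, ENNReal.ofReal (PhiLam lam (|f x| / t)) * HLM n w x :=
        setLIntegral_one_lt_HLM_le w _
    _ = 4 ^ n * ∫⁻ x, ENNReal.ofReal (PhiLam lam (f x / t)) * HLM n w x := by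
        simp only [abs_of_nonneg (hf _)]

/-- the Fefferman–Stein type inequality for the Orlicz maximal operator:
`w({M_{Φ_λ}f > t}) ≤ c ∫ Φ_λ(f/t) Mw dx` for every weight `w`, every `t > 0` and
every nonnegative measurable `f`. -/
theorem statement12 (n : ℕ) (hn : 1 ≤ n) (lam : ℝ) (hlam : 0 ≤ lam) :
    ∃ c : ℝ≥0∞, 0 < c ∧ c < ∞ ∧
      ∀ w : (Fin n → ℝ) → ℝ≥0∞, IsWeight n w →
        ∀ t : ℝ, 0 < t → ∀ f : (Fin n → ℝ) → ℝ, Measurable f → (∀ x, 0 ≤ f x) →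
          (∫⁻ x in {x | ENNReal.ofReal t < orliczMax n lam f x}, w x) ≤
            c * ∫⁻ x, ENNReal.ofReal (PhiLam lam (f x / t)) * HLM n w x :=
  statement12_general n lam
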